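/- arXiv:2410.16224 — 6 statements merged into one kernel-verified Lean document; each statement's English description precedes it below -/
import Mathlib

section
/- Let ε > 0 and let (X,d_X), (Y,d_Y) be metric spaces. If f: X → Y is a bijective ε-local isometry (i.e., d_X(p,q) < ε implies d_Y(f(p),f(q)) = d_X(p,q)) and its inverse f⁻¹ is also an ε-local isometry, then f is a metric isometry between the ε-truncated spaces (X, d_{X,ε}) and (Y, d_{Y,ε}). -/
/-- An ε-local isometry: a continuous map preserving distances of points at
distance `< ε`. -/
def IsLocIsom {X Y : Type*} [MetricSpace X] [MetricSpace Y] (ε : ℝ) (f : X → Y) : Prop :=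
  Continuous f ∧ ∀ p q : X, dist p q < ε → dist (f p) (f q) = dist p q

/-- If `f : X → Y` is a bijective ε-local isometry whose inverse is also
an ε-local isometry, then `f` is a metric isometry between the ε-truncated spaces:
`min (d_Y (f p) (f q)) ε = min (d_X p q) ε` for all `p, q`. -/
theorem bijective_locIsom_trunc_isometry {X Y : Type*} [MetricSpace X] [MetricSpace Y]
    (ε : ℝ) (hε : 0 < ε) (f : X → Y) (g : Y → X)
    (hf : Function.Bijective f) (hgf : Function.LeftInverse g f)
    (hfg : Function.RightInverse g f)
    (hfl : IsLocIsom ε f) (hgl : IsLocIsom ε g) :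
    ∀ p q : X, min (dist (f p) (f q)) ε = min (dist p q) ε := by
  intro p q
  by_cases h : dist p q < ε
  · rw [hfl.2 p q h]
  · push_neg at h
    rw [min_eq_right h]
    by_contra hne
    have hlt : dist (f p) (f q) < ε := by
      rcases lt_or_ge (dist (f p) (f q)) ε with h' | h'
      · exact h'
      · exact absurd (min_eq_right h') hne
    have := hgl.2 (f p) (f q) hlt
    rw [hgf p, hgf q] at this
    exact absurd (this ▸ hlt) (not_lt.2 h)
end

section
/- Let (X,d) be a compact metric space and ε > 0. Then the Gromov–Hausdorff distance between (X,d) and its ε-truncation (X,d_ε) equals (1/2)·max{diam(X) − ε, 0}. -/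
/-- A correspondence between `X` and `Y`: a relation whose projections are surjective. -/
def IsCorrespondence {X Y : Type*} (R : Set (X × Y)) : Prop :=
  (∀ x : X, ∃ y : Y, (x, y) ∈ R) ∧ (∀ y : Y, ∃ x : X, (x, y) ∈ R)

/-- The distortion of a correspondence w.r.t. distance functions `dX`, `dY`. -/
noncomputable def corrDistortion {X Y : Type*} (dX : X → X → ℝ) (dY : Y → Y → ℝ)
    (R : Set (X × Y)) : ℝ :=
  sSup { r : ℝ | ∃ p ∈ R, ∃ q ∈ R, r = |dX p.1 q.1 - dY p.2 q.2| }

/-- The Gromov–Hausdorff distance of `(X,dX)` and `(Y,dY)`, expressed as half the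
infimum of the distortions over all correspondences between `X` and `Y`. -/
noncomputable def ghDistCorr (X Y : Type*) (dX : X → X → ℝ) (dY : Y → Y → ℝ) : ℝ :=
  (1 / 2) * sInf { r : ℝ | ∃ R : Set (X × Y), IsCorrespondence R ∧ r = corrDistortion dX dY R }

/-- For a compact metric space `(X,d)` and `ε > 0`, the Gromov–Hausdorff
distance between `(X,d)` and its ε-truncation `(X, d_ε)` equals
`(1/2) · max (diam X − ε) 0`. -/
theorem ghDist_self_trunc (X : Type*) [MetricSpace X] [CompactSpace X] (ε : ℝ) (hε : 0 < ε) :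
    ghDistCorr X X (fun x y => dist x y) (fun x y => min (dist x y) ε) =
      (1 / 2) * max (Metric.diam (Set.univ : Set X) - ε) 0 := by
  classical
  set D := Metric.diam (Set.univ : Set X) with hD
  have hBd : Bornology.IsBounded (Set.univ : Set X) := isCompact_univ.isBounded
  have hDnn : 0 ≤ D := Metric.diam_nonneg
  by_cases hne : Nonempty X
  · -- nonempty case
    set M := max (D - ε) 0 with hM
    -- the general lower bound for any correspondence
    have lower : ∀ R : Set (X × X), IsCorrespondence R →
        M ≤ corrDistortion (fun x y => dist x y) (fun x y => min (dist x y) ε) R := by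
      intro R hR
      set S := { r : ℝ | ∃ p ∈ R, ∃ q ∈ R,
        r = |dist p.1 q.1 - min (dist p.2 q.2) ε| } with hS
      obtain ⟨x₀⟩ := hne
      obtain ⟨y₀, hy₀⟩ := hR.1 x₀
      have hSne : S.Nonempty :=
        ⟨_, ⟨(x₀, y₀), hy₀, (x₀, y₀), hy₀, rfl⟩⟩
      have hbdd : BddAbove S := by
        refine ⟨D + ε, ?_⟩
        rintro r ⟨p, hp, q, hq, rfl⟩
        have h1 : dist p.1 q.1 ≤ D :=
          Metric.dist_le_diam_of_mem hBd (Set.mem_univ _) (Set.mem_univ _)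
        have h2 : min (dist p.2 q.2) ε ≤ ε := min_le_right _ _
        have h3 : 0 ≤ min (dist p.2 q.2) ε := le_min dist_nonneg hε.le
        have h4 : 0 ≤ dist p.1 q.1 := dist_nonneg
        rw [abs_le]
        constructor <;> linarith
      have h0 : 0 ≤ sSup S := by
        have := le_csSup hbdd (⟨(x₀, y₀), hy₀, (x₀, y₀), hy₀, rfl⟩ : _ ∈ S)
        exact le_trans (abs_nonneg _) this
      have hDe : D - ε ≤ sSup S := by
        have key : ∀ x x' : X, dist x x' ≤ sSup S + ε := by
          intro x x'
          obtain ⟨y, hy⟩ := hR.1 x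
          obtain ⟨y', hy'⟩ := hR.1 x'
          have hmem : |dist x x' - min (dist y y') ε| ∈ S :=
            ⟨(x, y), hy, (x', y'), hy', rfl⟩
          have hle := le_csSup hbdd hmem
          have h2 : min (dist y y') ε ≤ ε := min_le_right _ _
          have := le_abs_self (dist x x' - min (dist y y') ε)
          linarith
        have : D ≤ sSup S + ε :=
          Metric.diam_le_of_forall_dist_le (by linarith)
            (fun x _ y _ => key x y)
        linarith
      exact max_le hDe h0
    -- the diagonal correspondence achieves M
    set Rd : Set (X × X) := { p | p.1 = p.2 } with hRd
    have hRdcorr : IsCorrespondence Rd :=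
      ⟨fun x => ⟨x, rfl⟩, fun y => ⟨y, rfl⟩⟩
    have hdiag : corrDistortion (fun x y => dist x y)
        (fun x y => min (dist x y) ε) Rd = M := by
      set S := { r : ℝ | ∃ p ∈ Rd, ∃ q ∈ Rd,
        r = |dist p.1 q.1 - min (dist p.2 q.2) ε| } with hS
      have hMle := lower Rd hRdcorr
      refine le_antisymm ?_ hMle
      obtain ⟨x₀⟩ := hne
      have hSne : S.Nonempty :=
        ⟨_, ⟨(x₀, x₀), rfl, (x₀, x₀), rfl, rfl⟩⟩
      refine csSup_le hSne ?_
      rintro r ⟨p, hp, q, hq, rfl⟩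
      have hp' : p.2 = p.1 := hp.symm
      have hq' : q.2 = q.1 := hq.symm
      rw [hp', hq']
      set t := dist p.1 q.1 with ht
      have htD : t ≤ D :=
        Metric.dist_le_diam_of_mem hBd (Set.mem_univ _) (Set.mem_univ _)
      have htnn : 0 ≤ t := dist_nonneg
      have habs : |t - min t ε| = t - min t ε :=
        abs_of_nonneg (by simp [sub_nonneg, min_le_left])
      rw [habs]
      rcases le_total t ε with h | h
      · rw [min_eq_left h]
        simp [hM]
      · rw [min_eq_right h]
        exact le_max_of_le_left (by linarith)
    -- conclude
    set T := { r : ℝ | ∃ R : Set (X × X), IsCorrespondence R ∧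
      r = corrDistortion (fun x y => dist x y) (fun x y => min (dist x y) ε) R } with hT
    have hMmem : M ∈ T := ⟨Rd, hRdcorr, hdiag.symm⟩
    have hTlb : ∀ r ∈ T, M ≤ r := by
      rintro r ⟨R, hR, rfl⟩
      exact lower R hR
    have : sInf T = M :=
      le_antisymm (csInf_le ⟨M, hTlb⟩ hMmem) (le_csInf ⟨M, hMmem⟩ hTlb)
    rw [ghDistCorr]
    rw [this]
  · -- empty case
    have hX : IsEmpty X := not_nonempty_iff.mp hne
    have huniv : (Set.univ : Set X) = ∅ := Set.univ_eq_empty_iff.mpr hX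
    have hdiam : D = 0 := by rw [hD, huniv, Metric.diam_empty]
    have hTeq : { r : ℝ | ∃ R : Set (X × X), IsCorrespondence R ∧
        r = corrDistortion (fun x y => dist x y) (fun x y => min (dist x y) ε) R }
        = {0} := by
      ext r
      constructor
      · rintro ⟨R, hR, rfl⟩
        have : { s : ℝ | ∃ p ∈ R, ∃ q ∈ R,
            s = |dist p.1 q.1 - min (dist p.2 q.2) ε| } = ∅ := by
          ext s
          simp only [Set.mem_setOf_eq, Set.mem_empty_iff_false, iff_false]
          rintro ⟨p, _, _⟩
          exact hX.elim p.1
        simp [corrDistortion, this, Real.sSup_empty]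
      · rintro rfl
        refine ⟨∅, ⟨fun x => (hX.elim x), fun y => (hX.elim y)⟩, ?_⟩
        have : { s : ℝ | ∃ p ∈ (∅ : Set (X × X)), ∃ q ∈ (∅ : Set (X × X)),
            s = |dist p.1 q.1 - min (dist p.2 q.2) ε| } = ∅ := by
          simp
        simp [corrDistortion, this, Real.sSup_empty]
    rw [ghDistCorr, hTeq, csInf_singleton, hdiam]
    rw [max_eq_right (by linarith)]
end

section
/- Let ε > 0 and D > 0. Let (X,d_X) and (Y,d_Y) be compact length spaces with diam(X) ≤ D and diam(Y) ≤ D. Then d_GH(X,Y) ≤ (2D/ε + 1) · d_GH((X,d_{X,ε}),(Y,d_{Y,ε})). -/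
/-- A metric space is a length space if the distance between any two points is the
infimum of the lengths (total variations) of continuous curves joining them. -/
def IsLengthSpace (X : Type*) [MetricSpace X] : Prop :=
  ∀ x y : X, ENNReal.ofReal (dist x y) =
    sInf { L : ENNReal | ∃ γ : ℝ → X, ContinuousOn γ (Set.Icc (0:ℝ) 1) ∧
      γ 0 = x ∧ γ 1 = y ∧ eVariationOn γ (Set.Icc (0:ℝ) 1) = L }

open Set Filter

/-- One-sided limit: if `dist (γ s) z ≤ c` for all `s` just to the right of `a`,
then `dist (γ a) z ≤ c`. -/
lemma approach_right {X : Type*} [MetricSpace X] {γ : ℝ → X}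
    (hγ : ContinuousOn γ (Set.Icc (0:ℝ) 1)) {a b : ℝ} (hab : a < b) (ha : 0 ≤ a) (hb : b ≤ 1)
    {z : X} {c : ℝ} (h : ∀ s ∈ Set.Ioc a b, dist (γ s) z ≤ c) : dist (γ a) z ≤ c := by
  have haI : a ∈ Set.Icc (0:ℝ) 1 := ⟨ha, hab.le.trans hb⟩
  have hsub : Set.Ioc a b ⊆ Set.Icc (0:ℝ) 1 := fun t ht => ⟨ha.trans ht.1.le, ht.2.trans hb⟩
  have hne : (nhdsWithin a (Set.Ioc a b)).NeBot := by
    rw [← mem_closure_iff_nhdsWithin_neBot, closure_Ioc hab.ne]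
    exact ⟨le_rfl, hab.le⟩
  have ht : Filter.Tendsto γ (nhdsWithin a (Set.Ioc a b)) (nhds (γ a)) :=
    (hγ a haI).mono_left (nhdsWithin_mono a hsub)
  have htd : Filter.Tendsto (fun s => dist (γ s) z) (nhdsWithin a (Set.Ioc a b))
      (nhds (dist (γ a) z)) := ht.dist tendsto_const_nhds
  exact le_of_tendsto htd (Filter.eventually_of_mem self_mem_nhdsWithin h)

/-- One-sided limit: if `dist (γ s) z ≤ c` for all `s` just to the left of `b`,
then `dist (γ b) z ≤ c`. -/
lemma approach_left {X : Type*} [MetricSpace X] {γ : ℝ → X}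
    (hγ : ContinuousOn γ (Set.Icc (0:ℝ) 1)) {a b : ℝ} (hab : a < b) (ha : 0 ≤ a) (hb : b ≤ 1)
    {z : X} {c : ℝ} (h : ∀ s ∈ Set.Ico a b, dist (γ s) z ≤ c) : dist (γ b) z ≤ c := by
  have hbI : b ∈ Set.Icc (0:ℝ) 1 := ⟨ha.trans hab.le, hb⟩
  have hsub : Set.Ico a b ⊆ Set.Icc (0:ℝ) 1 := fun t ht => ⟨ha.trans ht.1, ht.2.le.trans hb⟩
  have hne : (nhdsWithin b (Set.Ico a b)).NeBot := by
    rw [← mem_closure_iff_nhdsWithin_neBot, closure_Ico hab.ne]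
    exact ⟨hab.le, le_rfl⟩
  have ht : Filter.Tendsto γ (nhdsWithin b (Set.Ico a b)) (nhds (γ b)) :=
    (hγ b hbI).mono_left (nhdsWithin_mono b hsub)
  have htd : Filter.Tendsto (fun s => dist (γ s) z) (nhdsWithin b (Set.Ico a b))
      (nhds (dist (γ b) z)) := ht.dist tendsto_const_nhds
  exact le_of_tendsto htd (Filter.eventually_of_mem self_mem_nhdsWithin h)

/-- In a length space, any two points can be joined by a chain of points with controlled
step size, total length, and number of steps. -/
lemma chain_exists {X : Type*} [MetricSpace X] (hX : IsLengthSpace X)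
    (x x' : X) (η δ : ℝ) (hη : 0 < η) (hδ : 0 < δ) :
    ∃ (N : ℕ) (p : ℕ → X), 1 ≤ N ∧ p 0 = x ∧ p N = x' ∧
      (∀ i < N, dist (p i) (p (i+1)) ≤ η) ∧
      (∑ i ∈ Finset.range N, dist (p i) (p (i+1))) ≤ dist x x' + δ ∧
      (N : ℝ) ≤ (dist x x' + δ) / η + 1 := by
  classical
  set I : Set ℝ := Set.Icc (0:ℝ) 1 with hI
  have h0I : (0:ℝ) ∈ I := ⟨le_rfl, zero_le_one⟩
  have h1I : (1:ℝ) ∈ I := ⟨zero_le_one, le_rfl⟩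
  have h1 : sInf { L : ENNReal | ∃ γ : ℝ → X, ContinuousOn γ I ∧
      γ 0 = x ∧ γ 1 = x' ∧ eVariationOn γ I = L } < ENNReal.ofReal (dist x x' + δ) := by
    rw [← hX x x']
    exact (ENNReal.ofReal_lt_ofReal_iff (by positivity)).mpr (by linarith)
  obtain ⟨L0, ⟨γ, hγ, hγ0, hγ1, hL0⟩, hlt⟩ := sInf_lt_iff.mp h1
  have hfin : eVariationOn γ I ≠ ⊤ := by
    rw [hL0]; exact (hlt.trans (by simp [ENNReal.ofReal_lt_top])).ne
  have hbv : BoundedVariationOn γ I := hfin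
  have hlbv : LocallyBoundedVariationOn γ I := hbv.locallyBoundedVariationOn
  set v : ℝ → ℝ := fun t => variationOnFromTo γ I 0 t with hv
  have hv0 : v 0 = 0 := variationOnFromTo.self γ I 0
  have hmono : ∀ s ∈ I, ∀ t ∈ I, s ≤ t → v s ≤ v t := fun s hs t ht h =>
    variationOnFromTo.monotoneOn hlbv h0I hs ht h
  have hdistv : ∀ s ∈ I, ∀ t ∈ I, s ≤ t → dist (γ s) (γ t) ≤ v t - v s := by
    intro s hs t ht hst
    have hadd : v s + variationOnFromTo γ I s t = v t := variationOnFromTo.add hlbv h0I hs ht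
    have heq : variationOnFromTo γ I s t = (eVariationOn γ (I ∩ Set.Icc s t)).toReal :=
      variationOnFromTo.eq_of_le γ I hst
    have hd : dist (γ s) (γ t) ≤ (eVariationOn γ (I ∩ Set.Icc s t)).toReal :=
      (hbv.mono Set.inter_subset_left).dist_le ⟨hs, le_rfl, hst⟩ ⟨ht, hst, le_rfl⟩
    rw [heq] at hadd
    linarith
  set L : ℝ := v 1 with hLdef
  have hLval : L = (eVariationOn γ I).toReal := by
    rw [hLdef]
    show variationOnFromTo γ I 0 1 = _
    rw [variationOnFromTo.eq_of_le γ I zero_le_one]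
    congr 1
    rw [hI, Set.inter_self]
  have hL : L ≤ dist x x' + δ := by
    rw [hLval]
    exact ENNReal.toReal_le_of_le_ofReal (by positivity) (hL0 ▸ hlt.le)
  have hL0' : 0 ≤ L := by rw [hLval]; exact ENNReal.toReal_nonneg
  set N : ℕ := max 1 ⌈L / η⌉₊ with hNdef
  have hN1 : 1 ≤ N := le_max_left _ _
  have hNηL : L ≤ (N : ℝ) * η := by
    have h1 : L / η ≤ (⌈L / η⌉₊ : ℝ) := Nat.le_ceil _
    have h2 : ((⌈L / η⌉₊ : ℕ) : ℝ) ≤ (N : ℝ) := by exact_mod_cast Nat.le_max_right 1 _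
    rw [div_le_iff₀ hη] at h1
    nlinarith
  have hNle : (N : ℝ) ≤ (dist x x' + δ) / η + 1 := by
    have hds : 0 ≤ L / η := by positivity
    have h2 : ((N : ℕ) : ℝ) = max 1 ((⌈L / η⌉₊ : ℕ) : ℝ) := by
      rw [hNdef]; exact_mod_cast Nat.cast_max ..
    have h3 : ((⌈L / η⌉₊ : ℕ) : ℝ) < L / η + 1 := Nat.ceil_lt_add_one hds
    have h4 : L / η ≤ (dist x x' + δ) / η := by gcongr
    have h5 : (0:ℝ) ≤ (dist x x' + δ) / η := by positivity
    rw [h2]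
    exact max_le (by linarith) (by linarith)
  -- the chain of parameters
  set T : ℕ → ℝ := fun i => sInf ({1} ∪ {s ∈ I | (i : ℝ) * η ≤ v s}) with hT
  have hbdd : ∀ i : ℕ, BddBelow ({1} ∪ {s ∈ I | (i : ℝ) * η ≤ v s}) := by
    intro i
    refine ⟨0, ?_⟩
    rintro s (rfl | ⟨hs, -⟩)
    · exact zero_le_one
    · exact hs.1
  have hne : ∀ i : ℕ, ({1} ∪ {s ∈ I | (i : ℝ) * η ≤ v s} : Set ℝ).Nonempty :=
    fun i => ⟨1, Or.inl rfl⟩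
  have hTI : ∀ i, T i ∈ I := by
    intro i
    constructor
    · apply le_csInf (hne i)
      rintro s (rfl | ⟨hs, -⟩)
      · exact zero_le_one
      · exact hs.1
    · exact csInf_le (hbdd i) (Or.inl rfl)
  have hTmono : ∀ i : ℕ, T i ≤ T (i+1) := by
    intro i
    apply csInf_le_csInf (hbdd i) (hne (i+1))
    rintro s (rfl | ⟨hs, hvs⟩)
    · exact Or.inl rfl
    · refine Or.inr ⟨hs, le_trans ?_ hvs⟩
      have : (i : ℝ) ≤ ((i : ℕ) + 1 : ℕ) := by exact_mod_cast Nat.le_succ i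
      push_cast at this ⊢
      nlinarith
  have hT0 : T 0 = 0 := by
    refine le_antisymm ?_ (hTI 0).1
    apply csInf_le (hbdd 0)
    exact Or.inr ⟨h0I, by simp [hv0]⟩
  have hfa : ∀ (i : ℕ) (s : ℝ), T i < s → s ≤ 1 → (i : ℝ) * η ≤ v s := by
    intro i s hts hs1
    obtain ⟨u, hu, hus⟩ := exists_lt_of_csInf_lt (hne i) hts
    rcases hu with rfl | ⟨huI, hvu⟩
    · linarith
    · have hsI : s ∈ I := ⟨le_trans huI.1 hus.le, hs1⟩
      exact hvu.trans (hmono u huI s hsI hus.le)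
  have hfb : ∀ (i : ℕ), ∀ s ∈ I, s < T i → v s < (i : ℝ) * η := by
    intro i s hsI hst
    by_contra hcon
    push_neg at hcon
    exact absurd (csInf_le (hbdd i) (Or.inr ⟨hsI, hcon⟩)) (not_le.mpr hst)
  -- step bound for intermediate segments
  have hstepT : ∀ i : ℕ, dist (γ (T i)) (γ (T (i+1))) ≤ η := by
    intro i
    rcases eq_or_lt_of_le (hTmono i) with heq | hlt'
    · rw [heq]; simp [hη.le]
    · have inner : ∀ s ∈ Set.Ioc (T i) (T (i+1)), dist (γ s) (γ (T (i+1))) ≤ η := by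
        rintro s ⟨hs1, hs2⟩
        rcases eq_or_lt_of_le hs2 with rfl | hslt
        · simp [hη.le]
        · rw [dist_comm]
          apply approach_left hγ hslt (le_trans (hTI i).1 hs1.le) (hTI (i+1)).2
          rintro w ⟨hw1, hw2⟩
          rw [dist_comm]
          have hsI : s ∈ I := ⟨le_trans (hTI i).1 hs1.le, le_trans hslt.le (hTI (i+1)).2⟩
          have hwI : w ∈ I := ⟨le_trans hsI.1 hw1, le_trans hw2.le (hTI (i+1)).2⟩
          have e1 : (i : ℝ) * η ≤ v s := hfa i s hs1 hsI.2
          have e2 : v w < ((i:ℕ)+1 : ℕ) * η := hfb (i+1) w hwI hw2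
          have e3 : dist (γ s) (γ w) ≤ v w - v s := hdistv s hsI w hwI hw1
          push_cast at e2
          linarith
      exact approach_right hγ hlt' (hTI i).1 (hTI (i+1)).2 inner
  -- step bound for the last segment
  have hlast : dist (γ (T (N-1))) (γ 1) ≤ η := by
    rcases eq_or_lt_of_le (hTI (N-1)).2 with heq | hlt'
    · rw [heq]; simp [hη.le]
    · apply approach_right hγ hlt' (hTI (N-1)).1 le_rfl
      rintro s ⟨hs1, hs2⟩
      have hsI : s ∈ I := ⟨le_trans (hTI (N-1)).1 hs1.le, hs2⟩
      have e1 : ((N-1 : ℕ) : ℝ) * η ≤ v s := hfa (N-1) s hs1 hs2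
      have e2 : dist (γ s) (γ 1) ≤ v 1 - v s := hdistv s hsI 1 h1I hs2
      have e3 : ((N-1 : ℕ) : ℝ) = (N : ℝ) - 1 := by
        rw [Nat.cast_sub hN1]; norm_num
    
      rw [e3] at e1
      have : v 1 = L := rfl
      nlinarith
  -- assemble the chain
  set u : ℕ → ℝ := fun i => if i < N then T i else 1 with hu
  have huI : ∀ i, u i ∈ I := by
    intro i
    rw [hu]
    dsimp only
    split
    · exact hTI i
    · exact h1I
  have humono : ∀ i, u i ≤ u (i+1) := by
    intro i
    rw [hu]
    dsimp only
    split <;> split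
    · exact hTmono i
    · exact (hTI i).2
    · omega
    · exact le_rfl
  have hu' : ∀ i, u i = if i < N then T i else 1 := fun i => rfl
  have hu0 : u 0 = T 0 := by rw [hu' 0, if_pos (by omega : 0 < N)]
  have huN : u N = 1 := by rw [hu' N, if_neg (by omega : ¬ N < N)]
  refine ⟨N, fun i => γ (u i), hN1, ?_, ?_, ?_, ?_, hNle⟩
  · show γ (u 0) = x
    rw [hu0, hT0, hγ0]
  · show γ (u N) = x'
    rw [huN, hγ1]
  · intro i hi
    show dist (γ (u i)) (γ (u (i+1))) ≤ η
    by_cases hiN : i + 1 < N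
    · rw [hu' i, if_pos hi, hu' (i+1), if_pos hiN]
      exact hstepT i
    · have hieq : i = N - 1 := by omega
      rw [hu' i, if_pos hi, hu' (i+1), if_neg hiN, hieq]
      exact hlast
  · show (∑ i ∈ Finset.range N, dist (γ (u i)) (γ (u (i+1)))) ≤ dist x x' + δ
    have hstep2 : ∀ i ∈ Finset.range N, dist (γ (u i)) (γ (u (i+1))) ≤ v (u (i+1)) - v (u i) :=
      fun i _ => hdistv (u i) (huI i) (u (i+1)) (huI (i+1)) (humono i)
    calc ∑ i ∈ Finset.range N, dist (γ (u i)) (γ (u (i+1)))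
        ≤ ∑ i ∈ Finset.range N, (v (u (i+1)) - v (u i)) := Finset.sum_le_sum hstep2
      _ = v (u N) - v (u 0) := Finset.sum_range_sub (fun i => v (u i)) N
      _ ≤ dist x x' + δ := by
          rw [huN, hu0, hT0, hv0, sub_zero, ← hLdef]
          exact hL

/-- One-sided comparison: if a relation nearly preserves truncated distances and `X` is a
length space, then distances in `Y` are controlled by distances in `X`. -/
lemma oneside {X Y : Type*} [MetricSpace X] [MetricSpace Y]
    (hX : IsLengthSpace X) {ε D r : ℝ} (hε : 0 < ε) (hD : 0 < D) (hr : 0 ≤ r)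
    (hdX : ∀ a b : X, dist a b ≤ D) (hdY : ∀ a b : Y, dist a b ≤ D)
    {R : Set (X × Y)} (hsurj : ∀ a : X, ∃ b : Y, (a, b) ∈ R)
    (hkey : ∀ p ∈ R, ∀ q ∈ R, min (dist p.2 q.2) ε ≤ min (dist p.1 q.1) ε + r)
    {x x' : X} {y y' : Y} (hxy : (x, y) ∈ R) (hx'y' : (x', y') ∈ R) :
    dist y y' ≤ dist x x' + (2 * D / ε + 1) * r := by
  classical
  rcases le_or_gt (ε / 2) r with hbig | hsmall
  · have h1 : dist y y' ≤ D := hdY y y'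
    have h2 : D ≤ 2 * D / ε * r := by
      rw [div_mul_eq_mul_div, le_div_iff₀ hε]
      nlinarith
    nlinarith [dist_nonneg (x := x) (y := x')]
  · refine le_of_forall_pos_le_add fun δ' hδ' => ?_
    obtain ⟨N, p, hN1, hp0, hpN, hstep, hsum, hNle⟩ :=
      chain_exists hX x x' (ε / 2) (δ' / 2) (half_pos hε) (half_pos hδ')
    set q : ℕ → Y := fun i =>
      if i = 0 then y else if i = N then y' else Classical.choose (hsurj (p i)) with hq
    have hq' : ∀ i, q i = if i = 0 then y else if i = N then y'
        else Classical.choose (hsurj (p i)) := fun i => rfl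
    have hq0 : q 0 = y := by rw [hq' 0, if_pos rfl]
    have hqN : q N = y' := by rw [hq' N, if_neg (by omega : ¬ N = 0), if_pos rfl]
    have hmem : ∀ i ≤ N, (p i, q i) ∈ R := by
      intro i hi
      rcases eq_or_ne i 0 with rfl | h0
    
      · rw [hq0, hp0]; exact hxy
      rcases eq_or_ne i N with rfl | hN
      · rw [hqN, hpN]; exact hx'y'
      · rw [hq' i, if_neg h0, if_neg hN]
        exact Classical.choose_spec (hsurj (p i))
    have hstepY : ∀ i < N, dist (q i) (q (i+1)) ≤ dist (p i) (p (i+1)) + r := by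
      intro i hi
      have h1 := hkey (p i, q i) (hmem i hi.le) (p (i+1), q (i+1)) (hmem (i+1) hi)
      simp only at h1
      have h2 : min (dist (p i) (p (i+1))) ε ≤ dist (p i) (p (i+1)) := min_le_left _ _
      have h3 : min (dist (q i) (q (i+1))) ε < ε := by
        have hs := hstep i hi
        have hminp : min (dist (p i) (p (i+1))) ε ≤ ε / 2 :=
          le_trans (min_le_left _ _) hs
        calc min (dist (q i) (q (i+1))) ε ≤ min (dist (p i) (p (i+1))) ε + r := h1
          _ ≤ ε / 2 + r := by linarith
          _ < ε := by linarith
      have h4 : min (dist (q i) (q (i+1))) ε = dist (q i) (q (i+1)) := by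
        by_contra hcon
        have heq : min (dist (q i) (q (i+1))) ε = ε := (min_choice _ _).resolve_left hcon
        rw [heq] at h3
        exact lt_irrefl ε h3
      rw [h4] at h1
      linarith
    have htri : dist y y' ≤ ∑ i ∈ Finset.range N, dist (q i) (q (i+1)) := by
      rw [← hq0, ← hqN]
      exact dist_le_range_sum_dist q N
    have hsum2 : ∑ i ∈ Finset.range N, dist (q i) (q (i+1)) ≤
        (∑ i ∈ Finset.range N, dist (p i) (p (i+1))) + N * r := by
      calc ∑ i ∈ Finset.range N, dist (q i) (q (i+1))
          ≤ ∑ i ∈ Finset.range N, (dist (p i) (p (i+1)) + r) :=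
            Finset.sum_le_sum fun i hi => hstepY i (Finset.mem_range.mp hi)
        _ = (∑ i ∈ Finset.range N, dist (p i) (p (i+1))) + N * r := by
            rw [Finset.sum_add_distrib, Finset.sum_const, Finset.card_range, nsmul_eq_mul]
    have hNr : (N : ℝ) * r ≤ ((dist x x' + δ' / 2) / (ε / 2) + 1) * r :=
      mul_le_mul_of_nonneg_right hNle hr
    have hexp : ((dist x x' + δ' / 2) / (ε / 2) + 1) * r =
        2 * dist x x' * r / ε + 2 * (δ' / 2) * r / ε + r := by
      field_simp
    have hdxx : dist x x' ≤ D := hdX x x'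
    have e1 : 2 * dist x x' * r / ε ≤ 2 * D * r / ε := by gcongr
    have e2 : 2 * (δ' / 2) * r / ε ≤ δ' / 2 := by
      rw [div_le_iff₀ hε]
      nlinarith
    have hgoal : (2 * D / ε + 1) * r = 2 * D * r / ε + r := by ring
    rw [hgoal]
    linarith

/-- If one of the two spaces is empty, the correspondence-infimum is `0`. -/
lemma degenerate_sInf {X Y : Type*} (dX : X → X → ℝ) (dY : Y → Y → ℝ)
    (h : IsEmpty X ∨ IsEmpty Y) :
    sInf {r : ℝ | ∃ R : Set (X × Y), IsCorrespondence R ∧ r = corrDistortion dX dY R} = 0 := by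
  classical
  have hdist : ∀ R : Set (X × Y), corrDistortion dX dY R = 0 := by
    intro R
    have he : {r : ℝ | ∃ p ∈ R, ∃ q ∈ R, r = |dX p.1 q.1 - dY p.2 q.2|} = ∅ := by
      ext r
      simp only [Set.mem_setOf_eq, Set.mem_empty_iff_false, iff_false]
      rintro ⟨p, hp, -⟩
      rcases h with h | h
      · exact h.elim p.1
      · exact h.elim p.2
    rw [corrDistortion, he, Real.sSup_empty]
  by_cases hco : ∃ R : Set (X × Y), IsCorrespondence R
  · have hset : {r : ℝ | ∃ R : Set (X × Y), IsCorrespondence R ∧ r = corrDistortion dX dY R}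
        = {0} := by
      ext r
      simp only [Set.mem_setOf_eq, Set.mem_singleton_iff]
      constructor
      · rintro ⟨R, -, rfl⟩; exact hdist R
      · rintro rfl; exact ⟨hco.choose, hco.choose_spec, (hdist _).symm⟩
    rw [hset, csInf_singleton]
  · have hset : {r : ℝ | ∃ R : Set (X × Y), IsCorrespondence R ∧ r = corrDistortion dX dY R}
        = (∅ : Set ℝ) := by
      ext r
      simp only [Set.mem_setOf_eq, Set.mem_empty_iff_false, iff_false]
      rintro ⟨R, hR, -⟩
      exact hco ⟨R, hR⟩
    rw [hset, Real.sInf_empty]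

/-- For compact length spaces `X`, `Y` of diameter at most `D`,
`d_GH(X,Y) ≤ (2D/ε + 1) · d_GH((X,d_{X,ε}), (Y,d_{Y,ε}))`. -/
theorem ghDist_le_trunc_ghDist (X Y : Type*) [MetricSpace X] [MetricSpace Y]
    [CompactSpace X] [CompactSpace Y] (hX : IsLengthSpace X) (hY : IsLengthSpace Y)
    (ε D : ℝ) (hε : 0 < ε) (hD : 0 < D)
    (hdX : Metric.diam (Set.univ : Set X) ≤ D) (hdY : Metric.diam (Set.univ : Set Y) ≤ D) :
    ghDistCorr X Y (fun x y => dist x y) (fun x y => dist x y) ≤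
      (2 * D / ε + 1) *
        ghDistCorr X Y (fun x y => min (dist x y) ε) (fun x y => min (dist x y) ε) := by
  classical
  set c : ℝ := 2 * D / ε + 1 with hc
  have hc0 : 0 < c := by rw [hc]; positivity
  by_cases hne : Nonempty X ∧ Nonempty Y
  case neg =>
    rw [ghDistCorr, ghDistCorr, degenerate_sInf, degenerate_sInf]
    · norm_num
    · rcases not_and_or.mp hne with h | h
      · exact Or.inl (not_nonempty_iff.mp h)
      · exact Or.inr (not_nonempty_iff.mp h)
    · rcases not_and_or.mp hne with h | h
      · exact Or.inl (not_nonempty_iff.mp h)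
      · exact Or.inr (not_nonempty_iff.mp h)
  case pos =>
  obtain ⟨hXne, hYne⟩ := hne
  have hboundX : ∀ a b : X, dist a b ≤ D := fun a b =>
    le_trans (Metric.dist_le_diam_of_mem isCompact_univ.isBounded (Set.mem_univ a)
      (Set.mem_univ b)) hdX
  have hboundY : ∀ a b : Y, dist a b ≤ D := fun a b =>
    le_trans (Metric.dist_le_diam_of_mem isCompact_univ.isBounded (Set.mem_univ a)
      (Set.mem_univ b)) hdY
  set S : Set ℝ := {r : ℝ | ∃ R : Set (X × Y), IsCorrespondence R ∧
    r = corrDistortion (fun x y => dist x y) (fun x y => dist x y) R} with hS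
  set T : Set ℝ := {r : ℝ | ∃ R : Set (X × Y), IsCorrespondence R ∧
    r = corrDistortion (fun x y => min (dist x y) ε) (fun x y => min (dist x y) ε) R} with hT
  have hTne : T.Nonempty := by
    refine ⟨_, Set.univ, ⟨fun x => ⟨hYne.some, Set.mem_univ _⟩,
      fun y => ⟨hXne.some, Set.mem_univ _⟩⟩, rfl⟩
  have hSlb : ∀ s ∈ S, (0:ℝ) ≤ s := by
    rintro s ⟨R, -, rfl⟩
    apply Real.sSup_nonneg
    rintro r ⟨p, -, q, -, rfl⟩
    exact abs_nonneg _
  have key : ∀ ρ ∈ T, sInf S ≤ c * ρ := by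
    rintro ρ ⟨R, ⟨hR1, hR2⟩, rfl⟩
    set r : ℝ := corrDistortion (fun x y => min (dist x y) ε)
      (fun x y => min (dist x y) ε) R with hrdef
    have hbddD : BddAbove {s : ℝ | ∃ p ∈ R, ∃ q ∈ R,
        s = |min (dist p.1 q.1) ε - min (dist p.2 q.2) ε|} := by
      refine ⟨ε, ?_⟩
      rintro s ⟨p, hp, q, hq, rfl⟩
      have h1 : min (dist p.1 q.1) ε ≤ ε := min_le_right _ _
      have h2 : (0:ℝ) ≤ min (dist p.1 q.1) ε := le_min dist_nonneg hε.le
      have h3 : min (dist p.2 q.2) ε ≤ ε := min_le_right _ _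
      have h4 : (0:ℝ) ≤ min (dist p.2 q.2) ε := le_min dist_nonneg hε.le
      rw [abs_le]
      constructor <;> linarith
    have hr0 : 0 ≤ r := by
      obtain ⟨y0, hy0⟩ := hR1 hXne.some
      have hmem : (0:ℝ) ∈ {s : ℝ | ∃ p ∈ R, ∃ q ∈ R,
          s = |min (dist p.1 q.1) ε - min (dist p.2 q.2) ε|} :=
        ⟨(hXne.some, y0), hy0, (hXne.some, y0), hy0, by simp⟩
      exact le_csSup hbddD hmem
    have hkeyabs : ∀ p ∈ R, ∀ q ∈ R,
        |min (dist p.1 q.1) ε - min (dist p.2 q.2) ε| ≤ r :=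
      fun p hp q hq => le_csSup hbddD ⟨p, hp, q, hq, rfl⟩
    have hmain : corrDistortion (fun x y => dist x y) (fun x y => dist x y) R ≤ c * r := by
      apply Real.sSup_le
      · rintro s ⟨p, hp, q, hq, rfl⟩
        simp only
        rw [abs_sub_le_iff]
        constructor
        · -- dist in X minus dist in Y
          have hsurj' : ∀ b : Y, ∃ a : X, ((b, a) : Y × X) ∈ {u : Y × X | (u.2, u.1) ∈ R} := by
            intro b
            obtain ⟨a, ha⟩ := hR2 b
            exact ⟨a, ha⟩
          have hkey' : ∀ u ∈ {u : Y × X | (u.2, u.1) ∈ R},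
              ∀ w ∈ {u : Y × X | (u.2, u.1) ∈ R},
              min (dist u.2 w.2) ε ≤ min (dist u.1 w.1) ε + r := by
            intro u hu w hw
            have := hkeyabs (u.2, u.1) hu (w.2, w.1) hw
            rw [abs_le] at this
            simp only at this
            linarith [this.1]
          have := oneside hY hε hD hr0 hboundY hboundX hsurj' hkey'
            (show ((p.2, p.1) : Y × X) ∈ {u : Y × X | (u.2, u.1) ∈ R} from hp)
            (show ((q.2, q.1) : Y × X) ∈ {u : Y × X | (u.2, u.1) ∈ R} from hq)
          rw [← hc] at this
          linarith
        · -- dist in Y minus dist in X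
          have hkey' : ∀ u ∈ R, ∀ w ∈ R,
              min (dist u.2 w.2) ε ≤ min (dist u.1 w.1) ε + r := by
            intro u hu w hw
            have := hkeyabs u hu w hw
            rw [abs_le] at this
            linarith [this.2]
          have := oneside hX hε hD hr0 hboundX hboundY hR1 hkey'
            (show ((p.1, p.2) : X × Y) ∈ R from hp)
            (show ((q.1, q.2) : X × Y) ∈ R from hq)
          rw [← hc] at this
          linarith
      · positivity
    refine le_trans (csInf_le ⟨0, hSlb⟩ ?_) hmain
    exact ⟨R, ⟨hR1, hR2⟩, rfl⟩
  have hfinal : sInf S ≤ c * sInf T := by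
    have hdiv : sInf S / c ≤ sInf T := by
      apply le_csInf hTne
      intro ρ hρ
      rw [div_le_iff₀ hc0]
      have := key ρ hρ
      linarith [mul_comm c ρ]
    rw [div_le_iff₀ hc0] at hdiv
    linarith [mul_comm (sInf T) c]
  show (1/2) * sInf S ≤ c * ((1/2) * sInf T)
  calc (1/2) * sInf S ≤ (1/2) * (c * sInf T) :=
        mul_le_mul_of_nonneg_left hfinal (by norm_num)
    _ = c * ((1/2) * sInf T) := by ring
end

section
/- Let (X,d_X) and (Y,d_Y) be compact length spaces and ε > 0. If the ε-truncated spaces (X,d_{X,ε}) and (Y,d_{Y,ε}) are isometric (via a bijective metric isometry), then (X,d_X) and (Y,d_Y) are isometric. -/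
section Aux

variable {X Y : Type*} [MetricSpace X] [MetricSpace Y]

/-- If `f` preserves edist of values of `γ` on `s`, the variations agree. -/
lemma evar_congr_aux {f : X → Y} {γ : ℝ → X} {s : Set ℝ}
    (h : ∀ u ∈ s, ∀ v ∈ s, edist (f (γ u)) (f (γ v)) = edist (γ u) (γ v)) :
    eVariationOn (f ∘ γ) s = eVariationOn γ s := by
  unfold eVariationOn
  refine iSup_congr fun p => Finset.sum_congr rfl fun i _ => ?_
  exact h _ (p.2.2.2 (i + 1)) _ (p.2.2.2 i)

lemma evar_Icc_sum (g : ℝ → X) (n : ℕ) (hn : 0 < n) :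
    ∀ k : ℕ, k ≤ n →
      eVariationOn g (Set.Icc (0:ℝ) (k / n)) =
        ∑ i ∈ Finset.range k, eVariationOn g (Set.Icc ((i:ℝ) / n) ((i + 1) / n)) := by
  intro k
  induction k with
  | zero =>
    intro _
    have h0 : ((0:ℕ):ℝ) / n = 0 := by simp
    rw [h0, Set.Icc_self, Finset.range_zero, Finset.sum_empty]
    exact eVariationOn.subsingleton g (fun x hx y hy => by simp_all)
  | succ k ih =>
    intro hk
    have hnp : (0:ℝ) < n := by exact_mod_cast hn
    have h1 : (0:ℝ) ≤ (k:ℝ) / n := by positivity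
    have h2 : (k:ℝ) / n ≤ ((k:ℝ) + 1) / n := (div_le_div_iff_of_pos_right hnp).mpr (by linarith)
    have key := eVariationOn.Icc_add_Icc g (s := Set.univ) h1 h2 (Set.mem_univ _)
    simp only [Set.univ_inter] at key
    rw [Finset.sum_range_succ, ← ih (Nat.le_of_succ_le hk)]
    push_cast
    exact key.symm

/-- A map preserving distances `< ε` preserves the variation of curves continuous
on `[0,1]`. -/
lemma evar_comp_eq {ε : ℝ} (hε : 0 < ε) {f : X → Y}
    (hloc : ∀ a b : X, dist a b < ε → dist (f a) (f b) = dist a b)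
    {γ : ℝ → X} (hγ : ContinuousOn γ (Set.Icc (0:ℝ) 1)) :
    eVariationOn (f ∘ γ) (Set.Icc (0:ℝ) 1) = eVariationOn γ (Set.Icc (0:ℝ) 1) := by
  have hu : UniformContinuousOn γ (Set.Icc (0:ℝ) 1) :=
    isCompact_Icc.uniformContinuousOn_of_continuous hγ
  obtain ⟨δ, hδ, hδε⟩ := Metric.uniformContinuousOn_iff.1 hu ε hε
  obtain ⟨n, hn, hnδ⟩ : ∃ n : ℕ, 0 < n ∧ 1 / (n:ℝ) < δ := by
    obtain ⟨n, hn⟩ := exists_nat_one_div_lt hδ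
    exact ⟨n + 1, Nat.succ_pos n, by exact_mod_cast hn⟩
  have hnp : (0:ℝ) < n := by exact_mod_cast hn
  have hsub : ∀ i : ℕ, i < n → Set.Icc ((i:ℝ)/n) (((i:ℝ)+1)/n) ⊆ Set.Icc (0:ℝ) 1 := by
    intro i hi
    apply Set.Icc_subset_Icc
    · positivity
    · rw [div_le_one hnp]
      have : (i:ℝ) + 1 ≤ n := by exact_mod_cast hi
      linarith
  have hterm : ∀ i : ℕ, i < n →
      eVariationOn (f ∘ γ) (Set.Icc ((i:ℝ)/n) (((i:ℝ)+1)/n)) =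
        eVariationOn γ (Set.Icc ((i:ℝ)/n) (((i:ℝ)+1)/n)) := by
    intro i hi
    apply evar_congr_aux
    intro u hu' v hv'
    have hdist : dist u v < δ := by
      rw [Real.dist_eq]
      have h1 : |u - v| ≤ ((i:ℝ)+1)/n - (i:ℝ)/n := by
        rw [abs_sub_le_iff]
        constructor <;> [skip; skip] <;>
          · have := hu'.1; have := hu'.2; have := hv'.1; have := hv'.2; linarith
      have h2 : ((i:ℝ)+1)/n - (i:ℝ)/n = 1/n := by ring
      linarith [h1, h2 ▸ h1]
    have hγd : dist (γ u) (γ v) < ε :=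
      hδε u (hsub i hi hu') v (hsub i hi hv') hdist
    have := hloc _ _ hγd
    rw [edist_dist, edist_dist, this]
  have h1 : (1:ℝ) = (n:ℝ)/n := by field_simp
  calc eVariationOn (f ∘ γ) (Set.Icc (0:ℝ) 1)
      = eVariationOn (f ∘ γ) (Set.Icc (0:ℝ) ((n:ℝ)/n)) := by rw [← h1]
    _ = ∑ i ∈ Finset.range n, eVariationOn (f ∘ γ) (Set.Icc ((i:ℝ)/n) (((i:ℝ)+1)/n)) :=
        evar_Icc_sum _ n hn n le_rfl
    _ = ∑ i ∈ Finset.range n, eVariationOn γ (Set.Icc ((i:ℝ)/n) (((i:ℝ)+1)/n)) :=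
        Finset.sum_congr rfl fun i hi => hterm i (Finset.mem_range.1 hi)
    _ = eVariationOn γ (Set.Icc (0:ℝ) ((n:ℝ)/n)) := (evar_Icc_sum _ n hn n le_rfl).symm
    _ = eVariationOn γ (Set.Icc (0:ℝ) 1) := by rw [← h1]

/-- An `ε`-local isometry between length spaces is distance non-increasing. -/
lemma key_le {ε : ℝ} (hε : 0 < ε) (hX : IsLengthSpace X) (hY : IsLengthSpace Y)
    {f : X → Y} (hloc : ∀ a b : X, dist a b < ε → dist (f a) (f b) = dist a b)
    (x x' : X) : dist (f x) (f x') ≤ dist x x' := by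
  have hcont : Continuous f := by
    rw [Metric.continuous_iff]
    intro b r hr
    refine ⟨min ε r, lt_min hε hr, fun a ha => ?_⟩
    rw [hloc a b (lt_of_lt_of_le ha (min_le_left _ _))]
    exact lt_of_lt_of_le ha (min_le_right _ _)
  rw [← ENNReal.ofReal_le_ofReal_iff dist_nonneg, hX x x', hY (f x) (f x')]
  apply le_sInf
  rintro L ⟨γ, hγc, hγ0, hγ1, hγL⟩
  apply sInf_le
  exact ⟨f ∘ γ, hcont.comp_continuousOn hγc, by simp [hγ0], by simp [hγ1],
    by rw [evar_comp_eq hε hloc hγc, hγL]⟩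

end Aux

/-- If the ε-truncations of two compact length spaces are isometric via a
bijective metric isometry, then the original spaces are isometric. -/
theorem trunc_isometric_imp_isometric (X Y : Type*) [MetricSpace X] [MetricSpace Y]
    [CompactSpace X] [CompactSpace Y] (hX : IsLengthSpace X) (hY : IsLengthSpace Y)
    (ε : ℝ) (hε : 0 < ε) (f : X → Y) (hf : Function.Bijective f)
    (hiso : ∀ x x' : X, min (dist (f x) (f x')) ε = min (dist x x') ε) :
    ∃ g : X → Y, Function.Bijective g ∧ ∀ x x' : X, dist (g x) (g x') = dist x x' := by
  -- local isometry of f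
  have hloc : ∀ a b : X, dist a b < ε → dist (f a) (f b) = dist a b := by
    intro a b hab
    have h := hiso a b
    rw [min_eq_left_of_lt hab] at h
    rcases le_or_gt ε (dist (f a) (f b)) with hge | hlt
    · rw [min_eq_right hge] at h; linarith
    · rwa [min_eq_left_of_lt hlt] at h
  -- inverse
  set e := Equiv.ofBijective f hf with he
  have hfe : ∀ y : Y, f (e.symm y) = y := fun y => e.apply_symm_apply y
  have hloc' : ∀ a b : Y, dist a b < ε → dist (e.symm a) (e.symm b) = dist a b := by
    intro a b hab
    have h := hiso (e.symm a) (e.symm b)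
    rw [hfe, hfe, min_eq_left_of_lt hab] at h
    rcases le_or_gt ε (dist (e.symm a) (e.symm b)) with hge | hlt
    · rw [min_eq_right hge] at h; linarith
    · rw [min_eq_left_of_lt hlt] at h; linarith
  refine ⟨f, hf, fun x x' => le_antisymm (key_le hε hX hY hloc x x') ?_⟩
  have := key_le hε hY hX hloc' (f x) (f x')
  have hx : e.symm (f x) = x := e.symm_apply_apply x
  have hx' : e.symm (f x') = x' := e.symm_apply_apply x'
  rwa [hx, hx'] at this
end

section
/- Let (X,d) be a compact length space and S ⊂ X closed. Suppose that for all p, q ∈ X there exist z ∈ S and a distance minimizing curve from p to z passing through q (or from q to z passing through p). Then the travel time map R: X → (C(S), ‖·‖_∞) is a metric isometry: ‖R(p) − R(q)‖_∞ = d(p,q) for all p, q ∈ X. -/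
/-- The travel time map `R : X → C(S, ℝ)`, `R p = (z ↦ d(p,z))`. -/
noncomputable def ttMap (X : Type*) [MetricSpace X] (S : Set X) : X → C(S, ℝ) :=
  fun p => ⟨fun z => dist p (z : X), by fun_prop⟩

/-- On a distance minimizing curve, intermediate points satisfy the triangle equality. -/
lemma triangle_eq_of_minimizing {X : Type*} [MetricSpace X] (γ : ℝ → X) {t : ℝ}
    (ht : t ∈ Set.Icc (0:ℝ) 1)
    (hvar : eVariationOn γ (Set.Icc (0:ℝ) 1) = ENNReal.ofReal (dist (γ 0) (γ 1))) :
    dist (γ 0) (γ t) + dist (γ t) (γ 1) = dist (γ 0) (γ 1) := by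
  obtain ⟨ht0, ht1⟩ := ht
  have hsplit := eVariationOn.Icc_add_Icc γ (s := Set.Icc (0:ℝ) 1) ht0 ht1 ⟨ht0, ht1⟩
  rw [Set.inter_eq_self_of_subset_left (Set.Icc_subset_Icc le_rfl le_rfl)] at hsplit
  have h1 : edist (γ 0) (γ t) ≤ eVariationOn γ (Set.Icc (0:ℝ) 1 ∩ Set.Icc 0 t) :=
    eVariationOn.edist_le γ ⟨⟨le_rfl, zero_le_one⟩, le_rfl, ht0⟩ ⟨⟨ht0, ht1⟩, ht0, le_rfl⟩
  have h2 : edist (γ t) (γ 1) ≤ eVariationOn γ (Set.Icc (0:ℝ) 1 ∩ Set.Icc t 1) :=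
    eVariationOn.edist_le γ ⟨⟨ht0, ht1⟩, le_rfl, ht1⟩ ⟨⟨zero_le_one, le_rfl⟩, ht1, le_rfl⟩
  have hle : edist (γ 0) (γ t) + edist (γ t) (γ 1) ≤ ENNReal.ofReal (dist (γ 0) (γ 1)) := by
    rw [← hvar, ← hsplit]; exact add_le_add h1 h2
  have hne1 : edist (γ 0) (γ t) ≠ ⊤ :=
    ne_top_of_le_ne_top ENNReal.ofReal_ne_top (le_trans le_self_add hle)
  have hne2 : edist (γ t) (γ 1) ≠ ⊤ :=
    ne_top_of_le_ne_top ENNReal.ofReal_ne_top (le_trans le_add_self hle)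
  have hsum : edist (γ 0) (γ t) + edist (γ t) (γ 1) ≠ ⊤ :=
    ne_top_of_le_ne_top ENNReal.ofReal_ne_top hle
  have := (ENNReal.toReal_le_toReal hsum ENNReal.ofReal_ne_top).mpr hle
  rw [ENNReal.toReal_add hne1 hne2] at this
  simp only [← dist_edist, edist_dist, ENNReal.toReal_ofReal dist_nonneg] at this
  exact le_antisymm this (dist_triangle _ _ _)

/-- If in a compact length space `(X,d)` with closed measurement set `S`
every pair `p, q` lies on a distance minimizing curve from one of them to a point `z ∈ S`
passing through the other, then the travel time map is a metric isometry:
`‖R p − R q‖_∞ = d(p,q)` for all `p, q`. -/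
theorem ttMap_isometry_of_extension (X : Type*) [MetricSpace X] [CompactSpace X]
    (hX : IsLengthSpace X) (S : Set X) (hS : IsClosed S)
    (hext : ∀ p q : X, ∃ z ∈ S,
      ∃ γ : ℝ → X, ∃ t ∈ Set.Icc (0:ℝ) 1, ContinuousOn γ (Set.Icc (0:ℝ) 1) ∧
        eVariationOn γ (Set.Icc (0:ℝ) 1) = ENNReal.ofReal (dist (γ 0) (γ 1)) ∧
        γ 1 = z ∧ ((γ 0 = p ∧ γ t = q) ∨ (γ 0 = q ∧ γ t = p))) :
    haveI : CompactSpace S := isCompact_iff_compactSpace.mp hS.isCompact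
    ∀ p q : X, dist (ttMap X S p) (ttMap X S q) = dist p q := by
  haveI : CompactSpace S := isCompact_iff_compactSpace.mp hS.isCompact
  intro p q
  apply le_antisymm
  · refine ContinuousMap.dist_le dist_nonneg |>.mpr fun z => ?_
    simp only [ttMap, ContinuousMap.coe_mk, Real.dist_eq]
    exact abs_dist_sub_le p q (z : X)
  · obtain ⟨z, hz, γ, t, ht, hcont, hvar, hγ1, hcase⟩ := hext p q
    have hkey := triangle_eq_of_minimizing γ ht hvar
    have hbound : dist ((ttMap X S p) ⟨z, hz⟩) ((ttMap X S q) ⟨z, hz⟩) ≤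
        dist (ttMap X S p) (ttMap X S q) := ContinuousMap.dist_apply_le_dist _
    simp only [ttMap, ContinuousMap.coe_mk, Real.dist_eq] at hbound
    rcases hcase with ⟨h0, htq⟩ | ⟨h0, htp⟩
    · rw [h0, htq, hγ1] at hkey
      have : dist p q = dist p z - dist q z := by linarith
      rw [this]
      exact le_trans (le_abs_self _) hbound
    · rw [h0, htp, hγ1] at hkey
      have : dist p q = dist q z - dist p z := by rw [dist_comm]; linarith
      rw [this]
      rw [abs_sub_comm] at hbound
      exact le_trans (le_abs_self _) hbound
end

section
/- Let (X,d) be a compact length space such that for every pair x, y ∈ X there is a distance-minimizing curve between x and y that does not branch (e.g., X is a Busemann G-space: two distance-minimizing curves that coincide on a nontrivial segment coincide on their common domain). Let S ⊂ X be the closure of a nonempty open set. Then the travel time map R: X → (C(S), ‖·‖_∞), R(p) = d(p,·)|_S, is injective, and being a continuous injection from a compact space it is a topological embedding. -/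
/-- `γ` is a unit-speed distance-minimizing geodesic on the interval `[a,b]`. -/
def IsMinGeodesicOn {X : Type*} [MetricSpace X] (γ : ℝ → X) (a b : ℝ) : Prop :=
  ∀ s ∈ Set.Icc a b, ∀ t ∈ Set.Icc a b, dist (γ s) (γ t) = |s - t|

/-- Let `(X,d)` be a compact length space in which every pair of points is
joined by a distance-minimizing curve, and in which distance minimizers do not branch
(as in a Busemann G-space: two unit-speed minimizers agreeing on a nontrivial initial
segment coincide). If `S` is the closure of a nonempty open set `U ⊆ X`, then the travel
time map `R : X → (C(S), ‖·‖_∞)` is injective and a topological embedding. -/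
theorem ttMap_embedding_of_nonbranching (X : Type*) [MetricSpace X] [CompactSpace X]
    (hX : IsLengthSpace X)
    (hmin : ∀ x y : X, ∃ γ : ℝ → X, IsMinGeodesicOn γ 0 (dist x y) ∧
      γ 0 = x ∧ γ (dist x y) = y)
    (hnb : ∀ (γ₁ γ₂ : ℝ → X) (T : ℝ), IsMinGeodesicOn γ₁ 0 T → IsMinGeodesicOn γ₂ 0 T →
      (∃ t, 0 < t ∧ t ≤ T ∧ ∀ s ∈ Set.Icc 0 t, γ₁ s = γ₂ s) →
      ∀ s ∈ Set.Icc 0 T, γ₁ s = γ₂ s)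
    (U : Set X) (hU : IsOpen U) (hUne : U.Nonempty) :
    haveI : CompactSpace (closure U) := isCompact_iff_compactSpace.mp
      isClosed_closure.isCompact
    Function.Injective (ttMap X (closure U)) ∧
      Topology.IsEmbedding (ttMap X (closure U)) := by
  haveI : CompactSpace (closure U) := isCompact_iff_compactSpace.mp
    isClosed_closure.isCompact
  have hinj : Function.Injective (ttMap X (closure U)) := by
    intro p q h
    have hp : ∀ z ∈ closure U, dist p z = dist q z := fun z hz =>
      ContinuousMap.congr_fun h ⟨z, hz⟩
    obtain ⟨x₀, hx₀⟩ := hUne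
    have hx₀c : x₀ ∈ closure U := subset_closure hx₀
    have hTq : dist x₀ q = dist x₀ p := by
      rw [dist_comm x₀ q, ← hp x₀ hx₀c, dist_comm]
    set T := dist x₀ p with hT
    rcases eq_or_lt_of_le (dist_nonneg : (0:ℝ) ≤ T) with h0 | hTpos
    · have hpx : p = x₀ := by
        have : dist x₀ p = 0 := h0.symm
        exact (dist_eq_zero.mp this).symm
      have hqx : q = x₀ := by
        have : dist x₀ q = 0 := by rw [hTq, hT, ← h0]
        exact (dist_eq_zero.mp this).symm
      rw [hpx, hqx]
    · obtain ⟨γ₁, hγ₁, hγ10, hγ1T⟩ := hmin x₀ p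
      rw [← hT] at hγ₁ hγ1T
      obtain ⟨ε, εpos, hball⟩ := Metric.isOpen_iff.mp hU x₀ hx₀
      set t := min T (ε / 2) with htdef
      have ht0 : 0 < t := lt_min hTpos (half_pos εpos)
      have htT : t ≤ T := min_le_left _ _
      have htmem : t ∈ Set.Icc (0:ℝ) T := ⟨le_of_lt ht0, htT⟩
      have h0mem : (0:ℝ) ∈ Set.Icc (0:ℝ) T := ⟨le_refl _, le_of_lt hTpos⟩
      have hTmem : T ∈ Set.Icc (0:ℝ) T := ⟨le_of_lt hTpos, le_refl _⟩
      set x := γ₁ t with hxdef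
      have hxx₀ : dist x x₀ = t := by
        rw [hxdef, ← hγ10, hγ₁ t htmem 0 h0mem]
        simp [abs_of_nonneg (le_of_lt ht0)]
      have hxU : x ∈ U := by
        apply hball
        rw [Metric.mem_ball, hxx₀]
        calc t ≤ ε / 2 := min_le_right _ _
          _ < ε := half_lt_self εpos
      have hxp : dist x p = T - t := by
        rw [hxdef, ← hγ1T, hγ₁ t htmem T hTmem, abs_of_nonpos (by linarith)]
        ring
      have hxq : dist x q = T - t := by
        rw [dist_comm, ← hp x (subset_closure hxU), dist_comm, hxp]
      obtain ⟨η, hη, hη0, hηe⟩ := hmin x q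
      rw [hxq] at hη hηe
      rcases lt_or_eq_of_le htT with htlt | hteq
      · -- t < T : concatenate γ₁ on [0,t] with η
        set δ : ℝ → X := fun s => if s ≤ t then γ₁ s else η (s - t) with hδdef
        have hδγ : ∀ s ∈ Set.Icc (0:ℝ) t, δ s = γ₁ s := by
          intro s hs
          simp only [hδdef, if_pos hs.2]
        have hδx₀ : ∀ s ∈ Set.Icc (0:ℝ) T, dist x₀ (δ s) ≤ s := by
          intro s hs
          by_cases hst : s ≤ t
          · rw [hδdef]; simp only [if_pos hst]
            rw [← hγ10, hγ₁ 0 h0mem s ⟨hs.1, hs.2⟩]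
            rw [abs_of_nonpos (by linarith [hs.1])]; linarith
          · push_neg at hst
            rw [hδdef]; simp only [if_neg (not_le.mpr hst)]
            have hmem : s - t ∈ Set.Icc (0:ℝ) (T - t) :=
              ⟨by linarith, by linarith [hs.2]⟩
            have h0m : (0:ℝ) ∈ Set.Icc (0:ℝ) (T - t) := ⟨le_refl _, by linarith⟩
            have hdx : dist x (η (s - t)) = s - t := by
              rw [← hη0, hη 0 h0m (s - t) hmem, abs_of_nonpos (by linarith)]; ring
            calc dist x₀ (η (s - t)) ≤ dist x₀ x + dist x (η (s - t)) :=
                  dist_triangle _ _ _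
              _ = t + (s - t) := by rw [dist_comm x₀ x, hxx₀, hdx]
              _ = s := by ring
        have hδq : ∀ s ∈ Set.Icc (0:ℝ) T, dist (δ s) q ≤ T - s := by
          intro s hs
          by_cases hst : s ≤ t
          · rw [hδdef]; simp only [if_pos hst]
            have hd1 : dist (γ₁ s) x = t - s := by
              rw [hxdef, hγ₁ s ⟨hs.1, le_trans hst htT⟩ t htmem,
                abs_of_nonpos (by linarith)]; ring
            calc dist (γ₁ s) q ≤ dist (γ₁ s) x + dist x q := dist_triangle _ _ _
              _ = (t - s) + (T - t) := by rw [hd1, hxq]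
              _ = T - s := by ring
          · push_neg at hst
            rw [hδdef]; simp only [if_neg (not_le.mpr hst)]
            have hmem : s - t ∈ Set.Icc (0:ℝ) (T - t) :=
              ⟨by linarith, by linarith [hs.2]⟩
            have hTm : (T - t) ∈ Set.Icc (0:ℝ) (T - t) := ⟨by linarith, le_refl _⟩
            rw [← hηe, hη (s - t) hmem (T - t) hTm, abs_of_nonpos (by linarith [hs.2])]
            linarith
        have key : ∀ s ∈ Set.Icc (0:ℝ) T, ∀ s' ∈ Set.Icc (0:ℝ) T, s ≤ s' →
            dist (δ s) (δ s') = s' - s := by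
          intro s hs s' hs' hss
          have hlow : s' - s ≤ dist (δ s) (δ s') := by
            have h1 : dist x₀ q ≤ dist x₀ (δ s) + (dist (δ s) (δ s') + dist (δ s') q) := by
              calc dist x₀ q ≤ dist x₀ (δ s') + dist (δ s') q := dist_triangle _ _ _
                _ ≤ (dist x₀ (δ s) + dist (δ s) (δ s')) + dist (δ s') q := by
                    gcongr; exact dist_triangle _ _ _
                _ = _ := by ring
            have h2 := hδx₀ s hs
            have h3 := hδq s' hs'
            rw [hTq] at h1
            linarith
          have hup : dist (δ s) (δ s') ≤ s' - s := by
            by_cases hs't : s' ≤ t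
            · have hst : s ≤ t := le_trans hss hs't
              rw [hδγ s ⟨hs.1, hst⟩, hδγ s' ⟨hs'.1, hs't⟩,
                hγ₁ s ⟨hs.1, hs.2⟩ s' ⟨hs'.1, hs'.2⟩, abs_of_nonpos (by linarith)]
              linarith
            · push_neg at hs't
              by_cases hst : s ≤ t
              · have hd1 : dist (δ s) x = t - s := by
                  rw [hδγ s ⟨hs.1, hst⟩, hxdef,
                    hγ₁ s ⟨hs.1, le_trans hst htT⟩ t htmem, abs_of_nonpos (by linarith)]
                  ring
                have hmem : s' - t ∈ Set.Icc (0:ℝ) (T - t) :=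
                  ⟨by linarith, by linarith [hs'.2]⟩
                have h0m : (0:ℝ) ∈ Set.Icc (0:ℝ) (T - t) := ⟨le_refl _, by linarith⟩
                have hd2 : dist x (η (s' - t)) = s' - t := by
                  rw [← hη0, hη 0 h0m (s' - t) hmem, abs_of_nonpos (by linarith)]; ring
                have hδs' : δ s' = η (s' - t) := by
                  rw [hδdef]; simp only [if_neg (not_le.mpr hs't)]
                calc dist (δ s) (δ s') ≤ dist (δ s) x + dist x (δ s') :=
                      dist_triangle _ _ _
                  _ = (t - s) + (s' - t) := by rw [hd1, hδs', hd2]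
                  _ = s' - s := by ring
              · push_neg at hst
                have hm1 : s - t ∈ Set.Icc (0:ℝ) (T - t) :=
                  ⟨by linarith, by linarith [hs.2]⟩
                have hm2 : s' - t ∈ Set.Icc (0:ℝ) (T - t) :=
                  ⟨by linarith, by linarith [hs'.2]⟩
                rw [hδdef]
                simp only [if_neg (not_le.mpr hst), if_neg (not_le.mpr hs't)]
                rw [hη (s - t) hm1 (s' - t) hm2, abs_of_nonpos (by linarith)]
                linarith
          linarith
        have hδmin : IsMinGeodesicOn δ 0 T := by
          intro s hs u hu
          rcases le_total s u with hsu | hus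
          · rw [key s hs u hu hsu, abs_sub_comm, abs_of_nonneg (by linarith)]
          · rw [dist_comm, key u hu s hs hus, abs_of_nonneg (by linarith)]
        have hagree : ∃ t', 0 < t' ∧ t' ≤ T ∧ ∀ s ∈ Set.Icc (0:ℝ) t', γ₁ s = δ s :=
          ⟨t, ht0, htT, fun s hs => (hδγ s hs).symm⟩
        have := hnb γ₁ δ T hγ₁ hδmin hagree T hTmem
        rw [hγ1T] at this
        rw [this, hδdef]
        simp only [if_neg (not_le.mpr htlt)]
        exact hηe
      · -- t = T : then x = p and dist x q = 0
        have hxeq : x = p := by rw [hxdef, hteq, hγ1T]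
        have : dist x q = 0 := by rw [hxq, hteq]; ring
        rw [← hxeq, eq_comm, ← dist_eq_zero.mp this]
  have hlip : LipschitzWith 1 (ttMap X (closure U)) := by
    apply LipschitzWith.of_dist_le_mul
    intro p q
    simp only [NNReal.coe_one, one_mul]
    rw [ContinuousMap.dist_le dist_nonneg]
    intro z
    simpa [ttMap, Real.dist_eq] using abs_dist_sub_le p q (z : X)
  exact ⟨hinj, (hlip.continuous.isClosedEmbedding hinj).isEmbedding⟩
end
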